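/- For every n ≥ 1, the word W_n obtained from F_n = θ^n(a) by deleting its last two letters is a palindrome. -/
import Mathlib

/-- The two-letter alphabet: `A` and `B`. -/
inductive Letter : Type
  | A : Letter
  | B : Letter
  deriving DecidableEq, Repr

open Letter

/-- The Fibonacci substitution θ : a → ab, b → a. -/
def theta : Letter → List Letter
  | A => [A, B]
  | B => [A]

/-- Extension of the substitution to words, by concatenation. -/
def substWord (w : List Letter) : List Letter := w.flatMap theta

/-- The n-th finite Fibonacci word F_n = θ^n(a). -/
def FibWord (n : ℕ) : List Letter := substWord^[n] [A]

/-- The infinite Fibonacci word (each F_n is a prefix of all later ones,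
and `FibWord (k+1)` has length `fib (k+3) ≥ k+1`, so index `k` is defined). -/
def FibSeq (k : ℕ) : Letter := (FibWord (k + 1)).getD k A

/-- `Wword n` is the Fibonacci word F_n with its final two letters removed. -/
def Wword (n : ℕ) : List Letter := (FibWord n).dropLast.dropLast

/-- The last two letters of `F_n`: `[A,B]` for odd `n`, `[B,A]` for even `n`. -/
def tl (n : ℕ) : List Letter := if n % 2 = 1 then [A, B] else [B, A]

lemma tl_rev (n : ℕ) : (tl n).reverse = tl (n + 1) := by
  rcases Nat.mod_two_eq_zero_or_one n with h | h <;>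
    simp [tl, h, Nat.add_mod]

lemma tl_two (n : ℕ) : tl (n + 2) = tl n := by
  simp [tl, Nat.add_mod]

lemma substWord_append (u v : List Letter) :
    substWord (u ++ v) = substWord u ++ substWord v := by
  simp [substWord]

lemma FibWord_succ (n : ℕ) : FibWord (n + 1) = substWord (FibWord n) := by
  simp [FibWord, Function.iterate_succ_apply']

lemma fib_rec (n : ℕ) : FibWord (n + 2) = FibWord (n + 1) ++ FibWord n := by
  induction n with
  | zero => decide
  | succ n ih =>
    rw [FibWord_succ (n + 2), ih, substWord_append, ← FibWord_succ, ← FibWord_succ, ih]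

lemma drop2 (u : List Letter) (x y : Letter) :
    (u ++ [x, y]).dropLast.dropLast = u := by
  have h : u ++ [x, y] = (u ++ [x]) ++ [y] := by simp
  rw [h, List.dropLast_concat, List.dropLast_concat]

lemma drop2tl (u : List Letter) (k : ℕ) :
    (u ++ tl k).dropLast.dropLast = u := by
  rcases Nat.mod_two_eq_zero_or_one k with h | h
  · have : tl k = [B, A] := by simp [tl, h]
    rw [this]; exact drop2 u B A
  · have : tl k = [A, B] := by simp [tl, h]
    rw [this]; exact drop2 u A B

lemma decomp : ∀ n, FibWord (n + 1) = Wword (n + 1) ++ tl (n + 1) := by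
  intro n
  induction n using Nat.strong_induction_on with
  | _ n ih =>
    match n with
    | 0 => decide
    | 1 => decide
    | (m + 2) =>
      have h1 := ih m (by omega)
      have h2 : FibWord (m + 3) = (FibWord (m + 2) ++ Wword (m + 1)) ++ tl (m + 1) := by
        rw [fib_rec (m + 1), h1]; simp
      have hW : Wword (m + 3) = FibWord (m + 2) ++ Wword (m + 1) := by
        unfold Wword
        rw [h2]
        exact drop2tl _ _
      rw [hW, h2, ← tl_two (m + 1)]

lemma keyB : ∀ n, FibWord n ++ FibWord (n + 1) = Wword (n + 2) ++ tl (n + 1) := by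
  intro n
  induction n with
  | zero => decide
  | succ n ih =>
    have h3 : FibWord (n + 3) = FibWord (n + 1) ++ (FibWord n ++ FibWord (n + 1)) := by
      rw [fib_rec (n + 1), fib_rec n]; simp
    rw [ih] at h3
    have hd := decomp (n + 2)
    rw [hd, tl_two, ← List.append_assoc] at h3
    have hW : Wword (n + 3) = FibWord (n + 1) ++ Wword (n + 2) :=
      List.append_cancel_right h3
    rw [decomp (n + 1), hW]
    simp

lemma keyA (n : ℕ) :
    Wword (n + 3) = Wword (n + 2) ++ tl (n + 2) ++ Wword (n + 1) := by
  have h : FibWord (n + 3) = (Wword (n + 2) ++ tl (n + 2) ++ Wword (n + 1)) ++ tl (n + 1) := by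
    rw [fib_rec (n + 1), decomp (n + 1), decomp n]; simp
  have h2 := decomp (n + 2)
  rw [h, ← tl_two (n + 1)] at h2
  exact List.append_cancel_right h2.symm

lemma keyB' (n : ℕ) :
    Wword (n + 3) = Wword (n + 1) ++ tl (n + 1) ++ Wword (n + 2) := by
  have h := keyB (n + 1)
  rw [decomp n, decomp (n + 1), ← List.append_assoc] at h
  exact (List.append_cancel_right h).symm

/-- For n ≥ 1, the word F_n with its last two letters deleted is a palindrome. -/
theorem fib_word_dropLast_two_palindrome (n : ℕ) (hn : 1 ≤ n) :
    List.Palindrome (Wword n) := by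
  obtain ⟨m, rfl⟩ : ∃ m, n = m + 1 := ⟨n - 1, by omega⟩
  clear hn
  induction m using Nat.strong_induction_on with
  | _ m ih =>
    match m with
    | 0 => exact List.Palindrome.of_reverse_eq (by decide)
    | 1 => exact List.Palindrome.of_reverse_eq (by decide)
    | (k + 2) =>
      have p1 := (ih k (by omega)).reverse_eq
      have p2 := (ih (k + 1) (by omega)).reverse_eq
      apply List.Palindrome.of_reverse_eq
      have trev : (tl (k + 2)).reverse = tl (k + 1) := by
        rw [tl_rev]; exact tl_two (k + 1)
      have hrev : (Wword (k + 3)).reverse = Wword (k + 1) ++ tl (k + 1) ++ Wword (k + 2) := by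
        rw [keyA k]
        simp [p1, p2, trev, List.append_assoc]
      rw [hrev, ← keyB' k]
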